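/- Let a,b ∈ ℝ^d with 0 < ε < 1/9, and let P be a polygonal ab-path of total length at most (1+ε)‖ab‖. Let N(a,b) be the closed annulus of points x with (1+ε)/2·‖ab‖ ≤ ‖x−a‖ ≤ ‖ab‖. Then the total length of the portion of P inside N(a,b) is at least (1−ε)/2 · ‖ab‖, and the total length of P outside N(a,b) is at most (1+3ε)/2 · ‖ab‖. -/

import Mathlib

/-!
Clamp the radial function `x ↦ ‖x − a‖` to `[r₁, r₂] = [(1+ε)/2·‖ab‖, ‖ab‖]`. Along the path the
clamped function rises from `r₁` at `a` to `r₂` at `b`, and on each segment its increase is at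
most the length of the part of the segment inside the annulus: every intermediate value in
`[r₁, r₂]` is attained at a parameter where the segment lies in the annulus, and the radial
function is `‖uv‖`-Lipschitz in the parameter. Summing, the portion inside the annulus has length
at least `r₂ − r₁ = (1−ε)/2·‖ab‖`; subtracting this from the total length `(1+ε)‖ab‖` bounds the
portion outside.
-/

/-- Total length of a polygonal path (sum of distances between consecutive
vertices). -/
noncomputable def pathWeight {X : Type*} [MetricSpace X] : List X → ℝ
  | [] => 0
  | [_] => 0
  | a :: b :: rest => dist a b + pathWeight (b :: rest)

/-- Length of the portion of the segment `[u,v]` lying in the set `A`. -/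
noncomputable def segLenIn {d : ℕ} (A : Set (EuclideanSpace ℝ (Fin d)))
    (u v : EuclideanSpace ℝ (Fin d)) : ℝ :=
  dist u v *
    (MeasureTheory.volume
      {t : ℝ | t ∈ Set.Icc (0 : ℝ) 1 ∧ ((1 - t) • u + t • v) ∈ A}).toReal

open Set MeasureTheory
open scoped NNReal ENNReal

theorem List.sum_map_zip_tail_sub {α : Type*} (φ : α → ℝ) {p : List α} {a b : α}
    (hhead : p.head? = some a) (hlast : p.getLast? = some b) :
    ((p.zip p.tail).map fun q => φ q.2 - φ q.1).sum = φ b - φ a := by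
  induction p generalizing a with
  | nil => simp at hhead
  | cons x l ih =>
    obtain rfl : x = a := by simpa using hhead
    cases l with
    | nil => simp_all
    | cons y l =>
      have hsum := ih rfl (by simpa [List.getLast?_cons_cons] using hlast)
      simp only [List.tail_cons, List.zip_cons_cons, List.map_cons, List.sum_cons] at hsum ⊢
      rw [hsum]
      ring

theorem Set.uIoo_clamp_subset {α : Type*} [LinearOrder α] (r₁ r₂ x y : α) :
    uIoo (max r₁ (min x r₂)) (max r₁ (min y r₂)) ⊆ uIoo x y ∩ Icc r₁ r₂ := by
  intro s
  simp only [uIoo, mem_Ioo, mem_inter_iff, mem_Icc]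
  grind

theorem abs_sub_le_mul_volume_of_uIoo_subset_image {F : ℝ → ℝ} {K : ℝ≥0} {S : Set ℝ}
    (hF : LipschitzOnWith K F S) (hS : volume S ≠ ∞) {x y : ℝ} (h : uIoo x y ⊆ F '' S) :
    |y - x| ≤ K * (volume S).toReal := by
  have himage : volume (F '' S) ≤ K * volume S := by
    simpa [hausdorffMeasure_real] using hF.hausdorffMeasure_image_le zero_le_one
  rw [← ENNReal.coe_toReal, ← ENNReal.toReal_mul,
    ← ENNReal.ofReal_le_iff_le_toReal (ENNReal.mul_ne_top ENNReal.coe_ne_top hS),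
    ← Real.volume_uIoo]
  exact (measure_mono h).trans himage

theorem abs_clamp_sub_le_segLenIn {d : ℕ} {f : EuclideanSpace ℝ (Fin d) → ℝ}
    (hf : LipschitzWith 1 f) (r₁ r₂ : ℝ) (u v : EuclideanSpace ℝ (Fin d)) :
    |max r₁ (min (f v) r₂) - max r₁ (min (f u) r₂)| ≤
      segLenIn {x | r₁ ≤ f x ∧ f x ≤ r₂} u v := by
  set F : ℝ → ℝ := fun t => f ((1 - t) • u + t • v)
  have hF : LipschitzWith (nndist u v) F := by
    have hFeq : F = f ∘ AffineMap.lineMap u v := by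
      funext t
      simp [F, AffineMap.lineMap_apply_module]
    simpa [hFeq] using hf.comp (lipschitzWith_lineMap (𝕜 := ℝ) u v)
  have hS : volume {t : ℝ | t ∈ Icc (0 : ℝ) 1 ∧ F t ∈ Icc r₁ r₂} ≠ ∞ :=
    measure_ne_top_of_subset (fun t ht => ht.1) (by simp)
  have hsub : uIoo (max r₁ (min (F 0) r₂)) (max r₁ (min (F 1) r₂)) ⊆
      F '' {t | t ∈ Icc (0 : ℝ) 1 ∧ F t ∈ Icc r₁ r₂} := by
    intro s hs
    obtain ⟨hsF, hsr⟩ := uIoo_clamp_subset r₁ r₂ _ _ hs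
    obtain ⟨t, ht, rfl⟩ := intermediate_value_uIcc hF.continuous.continuousOn
      (uIoo_subset_uIcc_self hsF)
    exact ⟨t, ⟨by simpa using ht, hsr⟩, rfl⟩
  simpa [F, segLenIn] using
    abs_sub_le_mul_volume_of_uIoo_subset_image hF.lipschitzOnWith hS hsub

/-- Let `0 < ε < 1/9` and let `P` be a polygonal `ab`-path of total length at
most `(1+ε)‖ab‖`. Let `N(a,b)` be the annulus of points `x` with
`(1+ε)/2·‖ab‖ ≤ ‖x−a‖ ≤ ‖ab‖`. Then the length of the portion of `P` inside
`N(a,b)` is at least `(1−ε)/2·‖ab‖`, and the length of the portion outside is at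
most `(1+3ε)/2·‖ab‖`. -/
theorem path_annulus_length {d : ℕ} (ε : ℝ) (hε0 : 0 < ε) (hε1 : ε < 1 / 9)
    (a b : EuclideanSpace ℝ (Fin d)) (p : List (EuclideanSpace ℝ (Fin d)))
    (hhead : p.head? = some a) (hlast : p.getLast? = some b)
    (hlen : pathWeight p ≤ (1 + ε) * dist a b) :
    (1 - ε) / 2 * dist a b ≤
        ((p.zip p.tail).map (fun q =>
          segLenIn {x | (1 + ε) / 2 * dist a b ≤ dist x a ∧ dist x a ≤ dist a b}
            q.1 q.2)).sum ∧
      pathWeight p -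
          ((p.zip p.tail).map (fun q =>
            segLenIn {x | (1 + ε) / 2 * dist a b ≤ dist x a ∧ dist x a ≤ dist a b}
              q.1 q.2)).sum ≤ (1 + 3 * ε) / 2 * dist a b := by
  set r₁ := (1 + ε) / 2 * dist a b with hr₁
  set r₂ := dist a b
  let φ : EuclideanSpace ℝ (Fin d) → ℝ := fun x => max r₁ (min (dist x a) r₂)
  have hr₁_nonneg : 0 ≤ r₁ := by positivity
  have hr₁₂ : r₁ ≤ r₂ := by nlinarith [dist_nonneg (x := a) (y := b)]
  have hφa : φ a = r₁ := by simp [φ, hr₁_nonneg]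
  have hφb : φ b = r₂ := by simp [φ, r₂, dist_comm b a, hr₁₂]
  have hinside : r₂ - r₁ ≤ ((p.zip p.tail).map (fun q =>
      segLenIn {x | r₁ ≤ dist x a ∧ dist x a ≤ r₂} q.1 q.2)).sum := by
    calc r₂ - r₁ = ((p.zip p.tail).map fun q => φ q.2 - φ q.1).sum := by
          rw [List.sum_map_zip_tail_sub φ hhead hlast, hφa, hφb]
      _ ≤ _ := List.sum_le_sum fun q _ =>
          (le_abs_self _).trans (abs_clamp_sub_le_segLenIn (LipschitzWith.dist_left a) _ _ _ _)
  constructor <;> linarith
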